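/- Let $k=\mathbb{F}_{2^m}$ with $m$ odd. The number of $a\in k^*$ for which $x^5+x+a^{-1}$ has exactly one root in $k$ and its quartic cofactor is irreducible over $k$ equals $(q/2)-1$, where $q=2^m$. -/

import Mathlib

/-!
Put `Q_z = X⁴ + zX³ + z²X² + z³X + z⁴ + 1`, so that `X⁵ + X + (z⁵ + z) = (X + z) Q_z` in
characteristic 2. A factorization `X⁵ + X + a⁻¹ = (X + z) g` forces `a⁻¹ = z⁵ + z` and `g = Q_z`,
and an irreducible `Q_z` has no root, so `z ↦ (z⁵ + z)⁻¹` identifies the `a` being counted with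
the `z` for which `Q_z` is irreducible.

As `m` is odd, `3 ∤ q - 1` and cubing is a bijection of `k`, so these `z` are the `(μ³ + 1)⁻¹`
with `μ ≠ 1`, and `Q_z` is irreducible iff `μ` is not of the form `y² + y`: writing `λ = μ⁴`, a
solution of `y² + y = λ` splits `Q_z` into explicit quadratics, and conversely a root of `Q_z` or a
quadratic factor of it produces such a `y`.

Finally `y ↦ y² + y` is additive with kernel `{0, 1}`, so its image has `q / 2` elements, and it
misses `1` because `y² + y = 1` would make `y ≠ 1` a cube root of unity. The count is
`q - q / 2 - 1`.
-/

open Polynomial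

theorem FiniteField.pow_injective_of_coprime {K : Type*} [Field K] [Fintype K] {n : ℕ}
    (hn : n ≠ 0) (hcop : n.Coprime (Fintype.card K - 1)) :
    Function.Injective fun x : K => x ^ n := by
  intro x y (hxy : x ^ n = y ^ n)
  rcases eq_or_ne y 0 with rfl | hy
  · exact (pow_eq_zero_iff hn).mp (hxy.trans (zero_pow hn))
  have hpow : (x / y) ^ n = 1 := by rw [div_pow, hxy, div_self (pow_ne_zero n hy)]
  have hxy0 : x / y ≠ 0 := fun h => by simp [h, zero_pow hn] at hpow
  have hgcd := pow_gcd_eq_one.mpr ⟨hpow, FiniteField.pow_card_sub_one_eq_one _ hxy0⟩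
  rwa [hcop.gcd_eq_one, pow_one, div_eq_one_iff_eq hy] at hgcd

theorem Nat.coprime_three_two_pow_sub_one {m : ℕ} (hm : Odd m) : Nat.Coprime 3 (2 ^ m - 1) := by
  obtain ⟨j, rfl⟩ := hm
  rw [Nat.Prime.coprime_iff_not_dvd Nat.prime_three]
  have : 2 ^ (2 * j + 1) % 3 = 2 := by
    rw [pow_succ, pow_mul, Nat.mul_mod, Nat.pow_mod]; norm_num
  generalize 2 ^ (2 * j + 1) = n at this ⊢
  omega

lemma Polynomial.Monic.eq_X_sq_add_C_mul_X_add_C {R : Type*} [CommRing R] {p : R[X]}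
    (hp : p.Monic) (h : p.natDegree = 2) : p = X ^ 2 + C (p.coeff 1) * X + C (p.coeff 0) := by
  conv_lhs => rw [hp.as_sum]
  simp only [h, Finset.sum_range_succ, Finset.sum_range_zero, pow_zero, pow_one, mul_one]
  ring

section ArtinSchreier

def artinSchreier (k : Type*) [CommRing k] [CharP k 2] : k →+ k :=
  AddMonoidHom.mk' (fun x => x ^ 2 + x) fun x y => by rw [CharTwo.add_sq]; ring

variable {k : Type*}

section CommRing

variable [CommRing k] [CharP k 2]

@[simp] lemma artinSchreier_apply (x : k) : artinSchreier k x = x ^ 2 + x := rfl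

lemma sq_mem_range_artinSchreier_iff {x : k} :
    x ^ 2 ∈ (artinSchreier k).range ↔ x ∈ (artinSchreier k).range := by
  simp only [AddMonoidHom.mem_range, artinSchreier_apply]
  constructor
  · -- `y² + y = x²` means `y = (x + y)²`
    rintro ⟨y, hy⟩
    exact ⟨x + y, by linear_combination (norm := ring_nf) hy; reduce_mod_char!⟩
  · rintro ⟨y, rfl⟩
    exact ⟨y ^ 2, by ring_nf; reduce_mod_char!⟩

end CommRing

variable [Field k] [CharP k 2]

lemma two_mul_card_range_artinSchreier [Finite k] :
    2 * Nat.card (artinSchreier k).range = Nat.card k := by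
  have hker : ((artinSchreier k).ker : Set k) = {0, 1} := by
    ext x
    simp only [SetLike.mem_coe, AddMonoidHom.mem_ker, artinSchreier_apply, Set.mem_insert_iff,
      Set.mem_singleton_iff, sq, ← mul_add_one, mul_eq_zero, CharTwo.add_eq_zero]
  have hcard : Nat.card (artinSchreier k).ker = 2 := by
    rw [← SetLike.coe_sort_coe, hker, Nat.card_coe_set_eq, Set.ncard_pair zero_ne_one]
  rw [← AddSubgroup.index_ker, ← hcard, AddSubgroup.card_mul_index]

lemma one_notMem_range_artinSchreier (hcube : Function.Injective fun x : k => x ^ 3) :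
    (1 : k) ∉ (artinSchreier k).range := by
  rintro ⟨y, hy⟩
  rw [artinSchreier_apply] at hy
  obtain rfl : y = 1 := hcube <| by
    linear_combination (norm := ring_nf) (y + 1) * hy
    reduce_mod_char!
  simp [CharTwo.add_self_eq_zero] at hy

lemma two_mul_ncard_compl_range_artinSchreier_sdiff_one_add_one [Finite k]
    (hcube : Function.Injective fun x : k => x ^ 3) :
    2 * ((((artinSchreier k).range : Set k)ᶜ \ {1}).ncard + 1) = Nat.card k := by
  rw [Set.ncard_sdiff_singleton_add_one (one_notMem_range_artinSchreier hcube)]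
  have hcompl := Set.ncard_add_ncard_compl ((artinSchreier k).range : Set k)
  have hrange := two_mul_card_range_artinSchreier (k := k)
  rw [← SetLike.coe_sort_coe, Nat.card_coe_set_eq] at hrange
  omega

end ArtinSchreier

section QuarticCofactor

variable {k : Type*}

noncomputable def quarticCofactor [CommRing k] (z : k) : k[X] :=
  X ^ 4 + C z * X ^ 3 + C (z ^ 2) * X ^ 2 + C (z ^ 3) * X + C (z ^ 4 + 1)

lemma X_add_C_mul_quarticCofactor [CommRing k] [CharP k 2] (z : k) :
    (X + C z) * quarticCofactor z = X ^ 5 + X + C (z ^ 5 + z) := by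
  simp only [quarticCofactor, map_add, map_pow, map_one]
  ring_nf; reduce_mod_char!

variable [Field k]

lemma monic_quarticCofactor (z : k) : (quarticCofactor z).Monic := by
  unfold quarticCofactor; monicity!

lemma degree_quarticCofactor (z : k) : (quarticCofactor z).degree = 4 := by
  unfold quarticCofactor; compute_degree!

lemma natDegree_quarticCofactor (z : k) : (quarticCofactor z).natDegree = 4 := by
  unfold quarticCofactor; compute_degree!

lemma eval_ne_zero_of_irreducible_quarticCofactor {z : k} (h : Irreducible (quarticCofactor z))
    (x : k) : (quarticCofactor z).eval x ≠ 0 := fun hx => by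
  have := degree_eq_one_of_irreducible_of_root h hx
  rw [degree_quarticCofactor] at this
  exact absurd this (by decide)

variable [CharP k 2]

lemma pow_five_add_self_ne_zero_of_irreducible {z : k} (h : Irreducible (quarticCofactor z)) :
    z ^ 5 + z ≠ 0 := by
  have hone := eval_ne_zero_of_irreducible_quarticCofactor h 1
  have heval : (quarticCofactor z).eval 1 = z * (z + 1) ^ 3 := by
    simp only [quarticCofactor, eval_add, eval_mul, eval_pow, eval_X, eval_C, one_pow, mul_one]
    ring_nf; reduce_mod_char!
  rw [heval] at hone
  have hfac : z ^ 5 + z = z * (z + 1) ^ 3 * (z + 1) := by ring_nf; reduce_mod_char!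
  rw [hfac]
  exact mul_ne_zero hone fun h1 => hone (by rw [h1]; ring)

lemma eq_of_pow_five_add_self_eq {w z : k} (h : Irreducible (quarticCofactor z))
    (hwz : w ^ 5 + w = z ^ 5 + z) : w = z := by
  have heval := congrArg (eval w) (X_add_C_mul_quarticCofactor z)
  simp only [eval_mul, eval_add, eval_pow, eval_X, eval_C] at heval
  rw [← hwz, CharTwo.add_self_eq_zero] at heval
  exact CharTwo.add_eq_zero.mp
    ((mul_eq_zero.mp heval).resolve_right (eval_ne_zero_of_irreducible_quarticCofactor h w))

lemma quarticCofactor_eq_mul {y z : k} (h : (y ^ 2 + y) ^ 3 * z ^ 4 = z ^ 4 + 1) :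
    quarticCofactor z = (X ^ 2 + C (z * y) * X + C (z ^ 2 * (1 + y + y ^ 2 + y ^ 3))) *
      (X ^ 2 + C (z + z * y) * X + C (z ^ 2 * y ^ 3)) := by
  have hC := congrArg C h
  simp only [quarticCofactor, map_add, map_mul, map_pow, map_one] at hC ⊢
  linear_combination (norm := ring_nf) hC; reduce_mod_char!

lemma not_irreducible_quarticCofactor_of_mem_range {ℓ z : k} (hrel : ℓ ^ 3 * z ^ 4 = z ^ 4 + 1)
    (hℓ : ℓ ∈ (artinSchreier k).range) : ¬ Irreducible (quarticCofactor z) := by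
  obtain ⟨y, rfl⟩ := hℓ
  rw [quarticCofactor_eq_mul hrel]
  have hquad (a b : k) : ¬ IsUnit (X ^ 2 + C a * X + C b) := fun hu => by
    have hdeg : (X ^ 2 + C a * X + C b : k[X]).natDegree = 2 := by compute_degree!
    exact two_ne_zero (hdeg.symm.trans (natDegree_eq_zero_of_isUnit hu))
  exact fun hirr => (hirr.isUnit_or_isUnit rfl).elim (hquad _ _) (hquad _ _)

lemma mem_range_artinSchreier_of_cube_eq {ℓ t : k} (h : ℓ ^ 3 = t * (t + 1) ^ 3) :
    ℓ ∈ (artinSchreier k).range := by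
  rcases eq_or_ne (t + 1) 0 with ht | ht
  · rw [ht, zero_pow three_ne_zero, mul_zero, pow_eq_zero_iff three_ne_zero] at h
    exact h ▸ zero_mem _
  -- `s = ℓ / (t + 1)` is a cube root of `t`, and `ℓ = s⁴ + s = (s² + s)² + (s² + s)`.
  obtain ⟨s, rfl⟩ : ∃ s, ℓ = s * (t + 1) := ⟨ℓ / (t + 1), (div_mul_cancel₀ ℓ ht).symm⟩
  obtain rfl : s ^ 3 = t := by
    rw [mul_pow] at h
    exact mul_right_cancel₀ (pow_ne_zero 3 ht) h
  exact ⟨s ^ 2 + s, by rw [artinSchreier_apply]; ring_nf; reduce_mod_char!⟩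

lemma mem_range_artinSchreier_of_eval_quarticCofactor_eq_zero {ℓ z α : k}
    (hrel : ℓ ^ 3 * z ^ 4 = z ^ 4 + 1) (hα : (quarticCofactor z).eval α = 0) :
    ℓ ∈ (artinSchreier k).range := by
  have hz : z ≠ 0 := by rintro rfl; simp at hrel
  apply mem_range_artinSchreier_of_cube_eq (t := α / z)
  simp only [quarticCofactor, eval_add, eval_mul, eval_pow, eval_X, eval_C] at hα
  field_simp
  linear_combination (norm := ring_nf) hrel + hα; reduce_mod_char!

end QuarticCofactor

section IrreducibilityCriterion

variable {k : Type*} [Field k] [CharP k 2] (hcube : Function.Injective fun x : k => x ^ 3)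
include hcube

lemma mem_range_artinSchreier_of_quarticCofactor_eq_mul {ℓ z a₀ a₁ b₀ b₁ : k}
    (hrel : ℓ ^ 3 * z ^ 4 = z ^ 4 + 1)
    (h : quarticCofactor z = (X ^ 2 + C a₁ * X + C a₀) * (X ^ 2 + C b₁ * X + C b₀)) :
    ℓ ∈ (artinSchreier k).range := by
  have hz : z ≠ 0 := by rintro rfl; simp at hrel
  have hexp : (X ^ 2 + C a₁ * X + C a₀) * (X ^ 2 + C b₁ * X + C b₀) =
      X ^ 4 + C (a₁ + b₁) * X ^ 3 + C (a₀ + b₀ + a₁ * b₁) * X ^ 2 + C (a₁ * b₀ + a₀ * b₁) * X +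
        C (a₀ * b₀) := by
    simp only [map_add, map_mul]; ring
  rw [hexp, quarticCofactor] at h
  have hcoeff (n : ℕ) := congrArg (coeff · n) h
  have h₃ : z = a₁ + b₁ := by simpa [-map_pow, -map_add, -map_mul] using hcoeff 3
  have h₂ : z ^ 2 = a₀ + b₀ + a₁ * b₁ := by simpa [-map_pow, -map_add, -map_mul] using hcoeff 2
  have h₁ : z ^ 3 = a₁ * b₀ + a₀ * b₁ := by simpa [-map_pow, -map_add, -map_mul] using hcoeff 1
  have h₀ : z ^ 4 + 1 = a₀ * b₀ := by simpa [-map_pow, -map_add, -map_mul] using hcoeff 0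
  obtain rfl : b₁ = z + a₁ := by linear_combination (norm := ring_nf) h₃; reduce_mod_char!
  obtain rfl : b₀ = z ^ 2 + a₀ + a₁ * (z + a₁) := by
    linear_combination (norm := ring_nf) h₂; reduce_mod_char!
  have ha₀ : a₀ * z = z ^ 3 + a₁ * z ^ 2 + a₁ ^ 2 * z + a₁ ^ 3 := by
    linear_combination (norm := ring_nf) h₁; reduce_mod_char!
  -- `(a₁ z + a₁²)³ = a₁³ · a₀ z = z⁶ + z²`, so `a₁ z + a₁² = z² ℓ`, i.e. `ℓ = s² + s` for
  -- `s = a₁ / z`.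
  have hcubes : (a₁ * z + a₁ ^ 2) ^ 3 = (z ^ 2 * ℓ) ^ 3 := by
    linear_combination (norm := ring_nf) z ^ 2 * hrel + z ^ 2 * h₀ + (a₀ * z + a₁ ^ 3) * ha₀
    reduce_mod_char!
  refine ⟨a₁ / z, ?_⟩
  rw [artinSchreier_apply]
  field_simp
  linear_combination hcube hcubes

lemma mem_range_artinSchreier_of_not_irreducible_quarticCofactor {ℓ z : k}
    (hrel : ℓ ^ 3 * z ^ 4 = z ^ 4 + 1) (h : ¬ Irreducible (quarticCofactor z)) :
    ℓ ∈ (artinSchreier k).range := by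
  rw [(monic_quarticCofactor z).irreducible_iff_natDegree', natDegree_quarticCofactor] at h
  push Not at h
  obtain ⟨f, g, hf, hg, hfg, hdeg⟩ :=
    h fun h1 => by simpa [h1] using natDegree_quarticCofactor z
  obtain hg1 | hg2 : g.natDegree = 1 ∨ g.natDegree = 2 := by rw [Finset.mem_Ioc] at hdeg; omega
  · refine mem_range_artinSchreier_of_eval_quarticCofactor_eq_zero hrel (α := g.coeff 0) ?_
    rw [← hfg, eval_mul, hg.eq_X_add_C hg1]
    simp [CharTwo.add_self_eq_zero]
  · have hf2 : f.natDegree = 2 := by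
      have := hf.natDegree_mul hg
      rw [hfg, natDegree_quarticCofactor] at this
      omega
    rw [hf.eq_X_sq_add_C_mul_X_add_C hf2, hg.eq_X_sq_add_C_mul_X_add_C hg2] at hfg
    exact mem_range_artinSchreier_of_quarticCofactor_eq_mul hcube hrel hfg.symm

theorem irreducible_quarticCofactor_iff {μ z : k} (hrel : μ ^ 3 * z = z + 1) :
    Irreducible (quarticCofactor z) ↔ μ ∉ (artinSchreier k).range := by
  -- `μ⁴` is the paper's `λ`, with `λ³ = 1 + z⁻⁴`
  have hrel₄ : (μ ^ 4) ^ 3 * z ^ 4 = z ^ 4 + 1 := by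
    linear_combination (norm := ring_nf)
      ((μ ^ 3 * z) ^ 3 + (μ ^ 3 * z) ^ 2 * (z + 1) + μ ^ 3 * z * (z + 1) ^ 2 + (z + 1) ^ 3) * hrel
    reduce_mod_char!
  have hμ : μ ^ 4 ∈ (artinSchreier k).range ↔ μ ∈ (artinSchreier k).range := by
    rw [show μ ^ 4 = (μ ^ 2) ^ 2 by ring, sq_mem_range_artinSchreier_iff,
      sq_mem_range_artinSchreier_iff]
  rw [← hμ]
  exact ⟨fun hirr hℓ => not_irreducible_quarticCofactor_of_mem_range hrel₄ hℓ hirr,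
    fun hℓ => by_contra fun hirr =>
      hℓ (mem_range_artinSchreier_of_not_irreducible_quarticCofactor hcube hrel₄ hirr)⟩

end IrreducibilityCriterion

section Bijections

variable {k : Type*} [Field k] [CharP k 2]

lemma bijOn_inv_pow_five_add_self :
    Set.BijOn (fun z : k => (z ^ 5 + z)⁻¹) {z | Irreducible (quarticCofactor z)}
      {a | a ≠ 0 ∧ ∃ z : k, ∃ g : k[X], g.Monic ∧ g.degree = 4 ∧ Irreducible g ∧
        (X ^ 5 + X + C a⁻¹ : k[X]) = (X + C z) * g} := by
  refine ⟨fun z hz => ?_, fun z _ w hw h => ?_, fun a ⟨_, z, g, _, _, hg, hfac⟩ => ?_⟩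
  · exact ⟨inv_ne_zero (pow_five_add_self_ne_zero_of_irreducible hz), z, _,
      monic_quarticCofactor z, degree_quarticCofactor z, hz,
      by rw [inv_inv, X_add_C_mul_quarticCofactor]⟩
  · exact eq_of_pow_five_add_self_eq hw (inv_injective h)
  · have ha' : z ^ 5 + z = a⁻¹ := by
      have := congrArg (eval z) hfac
      simp only [eval_mul, eval_add, eval_pow, eval_X, eval_C, CharTwo.add_self_eq_zero,
        zero_mul] at this
      exact CharTwo.add_eq_zero.mp this
    have hg' : g = quarticCofactor z := mul_left_cancel₀ (X_add_C_ne_zero z) <| by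
      rw [← hfac, X_add_C_mul_quarticCofactor, ha']
    exact ⟨z, show Irreducible _ from hg' ▸ hg, by simp only [ha', inv_inv]⟩

lemma bijOn_inv_pow_three_add_one [Finite k] (hcube : Function.Injective fun x : k => x ^ 3) :
    Set.BijOn (fun μ : k => (μ ^ 3 + 1)⁻¹) (((artinSchreier k).range : Set k)ᶜ \ {1})
      {z | Irreducible (quarticCofactor z)} := by
  refine ⟨fun μ ⟨hμ, hμ1⟩ => ?_, fun μ _ ν _ h => hcube ?_, fun z hz => ?_⟩
  · have hne : μ ^ 3 + 1 ≠ 0 := fun h =>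
      hμ1 (hcube (show μ ^ 3 = 1 ^ 3 by rw [one_pow]; exact CharTwo.add_eq_zero.mp h))
    refine (irreducible_quarticCofactor_iff hcube ?_).mpr hμ
    field_simp
    ring_nf; reduce_mod_char!
  · simpa using inv_injective h
  · have hz0 : z ≠ 0 := by
      rintro rfl
      exact pow_five_add_self_ne_zero_of_irreducible hz (by ring)
    obtain ⟨μ, hμ⟩ := Finite.injective_iff_surjective.mp hcube (z⁻¹ + 1)
    have hrel : μ ^ 3 * z = z + 1 := by
      simp only at hμ
      rw [hμ]
      field_simp
      ring
    refine ⟨μ, ⟨(irreducible_quarticCofactor_iff hcube hrel).mp hz, ?_⟩, ?_⟩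
    · rintro rfl
      simp at hrel
    · simp only [hμ, CharTwo.add_cancel_right, inv_inv]

end Bijections

/-- For `m` odd, the number of `a ∈ k*` for which `x⁵ + x + a⁻¹` factors over `k`
as (one linear factor)·(irreducible quartic) — i.e. has exactly one root in `k`
with irreducible quartic cofactor — equals `q/2 - 1` where `q = 2^m`. -/
theorem stmt_18 (k : Type*) [Field k] [Fintype k] [CharP k 2]
    (m : ℕ) (hm : Odd m) (hq : Fintype.card k = 2 ^ m) :
    Nat.card {a : k | a ≠ 0 ∧ ∃ z : k, ∃ g : k[X], g.Monic ∧ g.degree = 4 ∧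
        Irreducible g ∧ (X ^ 5 + X + C a⁻¹ : k[X]) = (X + C z) * g}
      = 2 ^ (m - 1) - 1 := by
  have hcube : Function.Injective fun x : k => x ^ 3 :=
    FiniteField.pow_injective_of_coprime three_ne_zero
      (by rw [hq]; exact Nat.coprime_three_two_pow_sub_one hm)
  have hcount := two_mul_ncard_compl_range_artinSchreier_sdiff_one_add_one hcube
  rw [Nat.card_eq_fintype_card, hq] at hcount
  rw [Nat.card_coe_set_eq, ← bijOn_inv_pow_five_add_self.ncard_eq,
    ← (bijOn_inv_pow_three_add_one hcube).ncard_eq]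
  obtain ⟨j, rfl⟩ := hm
  rw [pow_succ] at hcount
  rw [Nat.add_sub_cancel]
  omega
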